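/- arXiv:2210.11952 — 5 statements merged into one kernel-verified Lean document; each statement's English description precedes it below -/
import Mathlib

section
/- The function x ↦ log(x²/(1 - cos(2πx))) is convex on the open interval (0, 1/2). -/
/-!
Since `1 - cos (2πx) = 2 sin² (πx)`, the function equals `2 g (πx) - log (2π²)` with
`g y = log y - log (sin y) = log (y / sin y)`. On `(0, π)` one has
`g'' y = 1 / sin² y - 1 / y² ≥ 0` because `sin y ≤ y`, so `g` is convex there.
-/

open Real Set

lemma one_sub_cos_two_mul (x : ℝ) : 1 - cos (2 * x) = 2 * sin x ^ 2 := by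
  rw [sin_sq_eq_half_sub]
  ring

lemma hasDerivAt_log_sub_log_sin {x : ℝ} (hx : x ≠ 0) (hsin : sin x ≠ 0) :
    HasDerivAt (fun y => log y - log (sin y)) (x⁻¹ - cos x / sin x) x :=
  (hasDerivAt_log hx).sub ((hasDerivAt_sin x).log hsin)

lemma hasDerivAt_inv_sub_cos_div_sin {x : ℝ} (hx : x ≠ 0) (hsin : sin x ≠ 0) :
    HasDerivAt (fun y => y⁻¹ - cos y / sin y) (1 / sin x ^ 2 - 1 / x ^ 2) x := by
  refine ((hasDerivAt_inv hx).sub ((hasDerivAt_cos x).div (hasDerivAt_sin x) hsin)).congr_deriv ?_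
  field_simp
  linear_combination x ^ 2 * sin_sq_add_cos_sq x

theorem convexOn_log_sub_log_sin : ConvexOn ℝ (Ioo 0 π) (fun x => log x - log (sin x)) := by
  have hne : ∀ x ∈ Ioo 0 π, x ≠ 0 ∧ sin x ≠ 0 := fun x hx =>
    ⟨hx.1.ne', (sin_pos_of_pos_of_lt_pi hx.1 hx.2).ne'⟩
  have hderiv := fun x hx => hasDerivAt_log_sub_log_sin (hne x hx).1 (hne x hx).2
  apply convexOn_of_hasDerivWithinAt2_nonneg (convex_Ioo 0 π)
    (f' := fun x => x⁻¹ - cos x / sin x) (f'' := fun x => 1 / sin x ^ 2 - 1 / x ^ 2)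
    (fun x hx => (hderiv x hx).continuousAt.continuousWithinAt) <;> rw [interior_Ioo]
  · exact fun x hx => (hderiv x hx).hasDerivWithinAt
  · exact fun x hx => (hasDerivAt_inv_sub_cos_div_sin (hne x hx).1 (hne x hx).2).hasDerivWithinAt
  · intro x hx
    have hsin := (hne x hx).2
    rw [sub_nonneg]
    exact one_div_le_one_div_of_le (by positivity) sin_sq_le_sq

theorem convexOn_log_sq_div_one_sub_cos :
    ConvexOn ℝ (Set.Ioo (0 : ℝ) (1 / 2))
      (fun x : ℝ => Real.log (x ^ 2 / (1 - Real.cos (2 * Real.pi * x)))) := by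
  have hscale : Ioo (0 : ℝ) (1 / 2) ⊆ LinearMap.mulLeft ℝ π ⁻¹' Ioo 0 π := by
    intro x hx
    simp only [mem_preimage, LinearMap.mulLeft_apply, mem_Ioo]
    constructor <;> nlinarith [pi_pos, hx.1, hx.2]
  have hconv := ((convexOn_log_sub_log_sin.comp_linearMap (LinearMap.mulLeft ℝ π)).subset
    hscale (convex_Ioo _ _)).smul zero_le_two
  refine (hconv.add_const (-log (2 * π ^ 2))).congr fun x hx => ?_
  have hsin : sin (π * x) ≠ 0 := (sin_pos_of_pos_of_lt_pi (hscale hx).1 (hscale hx).2).ne'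
  have hx0 : x ≠ 0 := hx.1.ne'
  simp only [Pi.add_apply, Function.comp_apply, LinearMap.mulLeft_apply, smul_eq_mul]
  rw [mul_assoc, one_sub_cos_two_mul, log_div (by positivity) (by positivity),
    log_mul two_ne_zero (by positivity), log_mul two_ne_zero (by positivity),
    log_mul pi_ne_zero hx0, log_pow, log_pow, log_pow]
  push_cast
  ring
end

section
/- Let f : ℝⁿ → ℝ be defined by f(x) = 2·Σ_{u ∈ S} z(u)·(1 - cos(2π·⟨u, x⟩)), where S is a finite set of vectors in ℝⁿ and z(u) ≥ 0 for all u ∈ S. Then f is subquadratic: f(x + y) + f(x - y) ≤ 2f(x) + 2f(y) for all x, y ∈ ℝⁿ. -/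
open scoped RealInnerProductSpace

theorem positive_type_sum_subquadratic (n : ℕ)
    (S : Finset (EuclideanSpace ℝ (Fin n)))
    (z : EuclideanSpace ℝ (Fin n) → ℝ) (hz : ∀ u ∈ S, 0 ≤ z u)
    (f : EuclideanSpace ℝ (Fin n) → ℝ)
    (hf : ∀ x, f x = 2 * ∑ u ∈ S, z u * (1 - Real.cos (2 * Real.pi * ⟪u, x⟫)))
    (x y : EuclideanSpace ℝ (Fin n)) :
    f (x + y) + f (x - y) ≤ 2 * f x + 2 * f y := by
  simp only [hf]
  rw [← mul_add, ← mul_add, ← mul_add]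
  have h : ∑ u ∈ S, z u * (1 - Real.cos (2 * Real.pi * ⟪u, x + y⟫)) +
      ∑ u ∈ S, z u * (1 - Real.cos (2 * Real.pi * ⟪u, x - y⟫)) ≤
      2 * ∑ u ∈ S, z u * (1 - Real.cos (2 * Real.pi * ⟪u, x⟫)) +
      2 * ∑ u ∈ S, z u * (1 - Real.cos (2 * Real.pi * ⟪u, y⟫)) := by
    rw [← Finset.sum_add_distrib, Finset.mul_sum, Finset.mul_sum, ← Finset.sum_add_distrib]
    apply Finset.sum_le_sum
    intro u hu
    have hzu := hz u hu
    rw [inner_add_right, inner_sub_right]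
    set a := 2 * Real.pi * ⟪u, x⟫ with ha
    set b := 2 * Real.pi * ⟪u, y⟫ with hb
    have h1 : 2 * Real.pi * (⟪u, x⟫ + ⟪u, y⟫) = a + b := by ring
    have h2 : 2 * Real.pi * (⟪u, x⟫ - ⟪u, y⟫) = a - b := by ring
    rw [h1, h2, Real.cos_add, Real.cos_sub]
    have hca := Real.cos_le_one a
    have hcb := Real.cos_le_one b
    nlinarith [mul_nonneg (sub_nonneg.mpr hca) (sub_nonneg.mpr hcb)]
  nlinarith [h]
end

section
/- Let u₀, u₁, u₂ ∈ ℝ² satisfy u₀ + u₁ + u₂ = 0, uᵢᵀuⱼ ≤ 0 for all i ≠ j, |u₀| = 1, |u₁| ≥ 1, and suppose u₀, u₁ are linearly independent. Then there exist nonnegative real numbers z₀, z₁, z₂ such that z₀·u₀u₀ᵀ + z₁·u₁u₁ᵀ + z₂·u₂u₂ᵀ = I, where I is the 2×2 identity matrix. -/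
/-!
Writing `u₂ = -(u₀ + u₁)`, the planar identity
`|u₁|² u₀u₀ᵀ + |u₀|² u₁u₁ᵀ - ⟪u₀, u₁⟫ (u₀u₁ᵀ + u₁u₀ᵀ) = det(u₀, u₁)² I`
becomes `∑ᵢ (-⟪uⱼ, uₖ⟫) uᵢuᵢᵀ = det(u₀, u₁)² I` with `{i, j, k} = {0, 1, 2}`.
For an obtuse superbasis the coefficients `-⟪uⱼ, uₖ⟫` are nonnegative and the determinant
is nonzero, so `zᵢ = -⟪uⱼ, uₖ⟫ / det(u₀, u₁)²` works.
-/

open scoped RealInnerProductSpace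
open Matrix

theorem neg_dotProduct_smul_vecMulVec_sum_eq_det_sq_smul_one (u v w : Fin 2 → ℝ)
    (huvw : u + v + w = 0) :
    (-(v ⬝ᵥ w)) • vecMulVec u u + (-(u ⬝ᵥ w)) • vecMulVec v v + (-(u ⬝ᵥ v)) • vecMulVec w w =
      (of ![u, v]).det ^ 2 • (1 : Matrix (Fin 2) (Fin 2) ℝ) := by
  obtain rfl : w = -(u + v) := eq_neg_of_add_eq_zero_right huvw
  ext i j
  fin_cases i <;> fin_cases j <;>
    simp [vecMulVec_apply, det_fin_two, dotProduct, Fin.sum_univ_two] <;> ring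

theorem det_of_ne_zero_of_linearIndependent {K : Type*} [Field K] {u v : Fin 2 → K}
    (h : LinearIndependent K ![u, v]) : (of ![u, v]).det ≠ 0 :=
  ((isUnit_iff_isUnit_det _).1 (linearIndependent_rows_iff_isUnit.1 h)).ne_zero

theorem exists_nonneg_smul_vecMulVec_sum_eq_one {u v w : Fin 2 → ℝ} (huvw : u + v + w = 0)
    (huv : u ⬝ᵥ v ≤ 0) (huw : u ⬝ᵥ w ≤ 0) (hvw : v ⬝ᵥ w ≤ 0)
    (hind : LinearIndependent ℝ ![u, v]) :
    ∃ a b c : ℝ, 0 ≤ a ∧ 0 ≤ b ∧ 0 ≤ c ∧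
      a • vecMulVec u u + b • vecMulVec v v + c • vecMulVec w w = 1 := by
  have hdet := det_of_ne_zero_of_linearIndependent hind
  have hD : 0 < (of ![u, v]).det ^ 2 := by positivity
  have key := neg_dotProduct_smul_vecMulVec_sum_eq_det_sq_smul_one u v w huvw
  generalize (of ![u, v]).det ^ 2 = D at hD key
  refine ⟨-(v ⬝ᵥ w) / D, -(u ⬝ᵥ w) / D, -(u ⬝ᵥ v) / D, div_nonneg (neg_nonneg.2 hvw) hD.le,
    div_nonneg (neg_nonneg.2 huw) hD.le, div_nonneg (neg_nonneg.2 huv) hD.le, ?_⟩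
  simp only [div_eq_inv_mul, mul_smul, ← smul_add, key, inv_smul_smul₀ hD.ne']

theorem EuclideanSpace.real_inner_eq_dotProduct {ι : Type*} [Fintype ι]
    (x y : EuclideanSpace ℝ ι) : ⟪x, y⟫ = (x : ι → ℝ) ⬝ᵥ y := by
  rw [EuclideanSpace.inner_eq_star_dotProduct, star_trivial, dotProduct_comm]

theorem linearIndependent_ofLp_pair {K ι : Type*} [RCLike K] [Fintype ι]
    {x y : EuclideanSpace K ι} (h : LinearIndependent K ![x, y]) :
    LinearIndependent K ![(x : ι → K), y] := by
  rw [LinearIndependent.pair_iff] at h ⊢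
  intro s t hst
  exact h s t (by simpa using congrArg (WithLp.toLp 2) hst)

theorem obtuse_superbasis_identity_decomposition_general
    (u₀ u₁ u₂ : EuclideanSpace ℝ (Fin 2))
    (hsum : u₀ + u₁ + u₂ = 0)
    (h01 : ⟪u₀, u₁⟫ ≤ 0) (h02 : ⟪u₀, u₂⟫ ≤ 0) (h12 : ⟪u₁, u₂⟫ ≤ 0)
    (hind : LinearIndependent ℝ ![u₀, u₁]) :
    ∃ z₀ z₁ z₂ : ℝ, 0 ≤ z₀ ∧ 0 ≤ z₁ ∧ 0 ≤ z₂ ∧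
      z₀ • Matrix.vecMulVec (u₀ : Fin 2 → ℝ) u₀ +
      z₁ • Matrix.vecMulVec (u₁ : Fin 2 → ℝ) u₁ +
      z₂ • Matrix.vecMulVec (u₂ : Fin 2 → ℝ) u₂ = (1 : Matrix (Fin 2) (Fin 2) ℝ) := by
  simp only [EuclideanSpace.real_inner_eq_dotProduct] at h01 h02 h12
  exact exists_nonneg_smul_vecMulVec_sum_eq_one (congrArg WithLp.ofLp hsum) h01 h02 h12
    (linearIndependent_ofLp_pair hind)

theorem obtuse_superbasis_identity_decomposition
    (u₀ u₁ u₂ : EuclideanSpace ℝ (Fin 2))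
    (hsum : u₀ + u₁ + u₂ = 0)
    (h01 : ⟪u₀, u₁⟫ ≤ 0) (h02 : ⟪u₀, u₂⟫ ≤ 0) (h12 : ⟪u₁, u₂⟫ ≤ 0)
    (hu₀ : ‖u₀‖ = 1) (hu₁ : 1 ≤ ‖u₁‖)
    (hind : LinearIndependent ℝ ![u₀, u₁]) :
    ∃ z₀ z₁ z₂ : ℝ, 0 ≤ z₀ ∧ 0 ≤ z₁ ∧ 0 ≤ z₂ ∧
      z₀ • Matrix.vecMulVec (u₀ : Fin 2 → ℝ) u₀ +
      z₁ • Matrix.vecMulVec (u₁ : Fin 2 → ℝ) u₁ +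
      z₂ • Matrix.vecMulVec (u₂ : Fin 2 → ℝ) u₂ = (1 : Matrix (Fin 2) (Fin 2) ℝ) :=
  obtuse_superbasis_identity_decomposition_general u₀ u₁ u₂ hsum h01 h02 h12 hind
end

section
/- Let u₀, u₁, u₂ ∈ ℝ² with u₀ + u₁ + u₂ = 0 and u₀, u₁ linearly independent, and suppose w₁ = u₁ - (u₀ᵀu₁)u₀ with |u₀| = 1. Then (1 + ((u₀ᵀu₁)² + u₀ᵀu₁)/|w₁|²)·u₀u₀ᵀ + ((1 + u₀ᵀu₁)/|w₁|²)·u₁u₁ᵀ + (−u₀ᵀu₁/|w₁|²)·u₂u₂ᵀ = I. -/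
open scoped RealInnerProductSpace

/-!
Expanding `u₂ u₂ᵀ = (u₀ + u₁)(u₀ + u₁)ᵀ` collapses the left-hand side to
`u₀ u₀ᵀ + w₁ w₁ᵀ / |w₁|²`. Since `w₁` is the Gram–Schmidt step applied to `u₁` against the unit
vector `u₀`, the pair `u₀, w₁ / |w₁|` is an orthonormal basis of `ℝ²`, and the outer products of
the vectors of any orthonormal basis of `𝕜ⁿ` sum to the identity.
-/

open Matrix

theorem OrthonormalBasis.sum_vecMulVec_star_self {𝕜 ι n : Type*} [RCLike 𝕜] [Fintype ι]
    [Fintype n] [DecidableEq n] (b : OrthonormalBasis ι 𝕜 (EuclideanSpace 𝕜 n)) :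
    ∑ i, vecMulVec (b i : n → 𝕜) (star (b i : n → 𝕜)) = 1 := by
  ext j k
  have hrepr := congrArg (fun x : EuclideanSpace 𝕜 n => x j) (b.sum_repr' (.single k 1))
  simpa [Matrix.sum_apply, vecMulVec_apply, EuclideanSpace.inner_single_right, one_apply, mul_comm,
    eq_comm] using hrepr

theorem Orthonormal.sum_vecMulVec_star_self {𝕜 ι n : Type*} [RCLike 𝕜] [Fintype ι] [Nonempty ι]
    [Fintype n] [DecidableEq n] {v : ι → EuclideanSpace 𝕜 n} (hv : Orthonormal 𝕜 v)
    (hcard : Fintype.card ι = Fintype.card n) :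
    ∑ i, vecMulVec (v i : n → 𝕜) (star (v i : n → 𝕜)) = 1 := by
  let b := (basisOfOrthonormalOfCardEqFinrank hv (by simpa using hcard)).toOrthonormalBasis
    (by rwa [coe_basisOfOrthonormalOfCardEqFinrank])
  have hb : ⇑b = v := by
    simp [b, Module.Basis.coe_toOrthonormalBasis, coe_basisOfOrthonormalOfCardEqFinrank]
  simpa [hb] using b.sum_vecMulVec_star_self

theorem orthonormal_gramSchmidt_pair {E : Type*} [NormedAddCommGroup E] [InnerProductSpace ℝ E]
    {u v : E} (hu : ‖u‖ = 1) (hw : v - ⟪u, v⟫ • u ≠ 0) :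
    Orthonormal ℝ ![u, ‖v - ⟪u, v⟫ • u‖⁻¹ • (v - ⟪u, v⟫ • u)] := by
  have horth : ⟪u, v - ⟪u, v⟫ • u⟫ = 0 := by
    rw [inner_sub_right, inner_smul_right, real_inner_self_eq_norm_sq, hu]
    ring
  simp [orthonormal_vecCons_iff, hu, norm_smul, hw, inner_smul_right, horth]

theorem vecMulVec_weighted_sum_eq_add_vecMulVec_sub_smul {K n : Type*} [Field K] (a b : n → K) (t d : K) :
    (1 + (t ^ 2 + t) / d) • vecMulVec a a + ((1 + t) / d) • vecMulVec b b +
        (-t / d) • vecMulVec (-(a + b)) (-(a + b)) =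
      vecMulVec a a + d⁻¹ • vecMulVec (b - t • a) (b - t • a) := by
  simp only [neg_vecMulVec, vecMulVec_neg, add_vecMulVec, vecMulVec_add, sub_vecMulVec,
    vecMulVec_sub, smul_vecMulVec, vecMulVec_smul]
  module

theorem gram_schmidt_identity_decomposition
    (u₀ u₁ u₂ : EuclideanSpace ℝ (Fin 2))
    (hsum : u₀ + u₁ + u₂ = 0)
    (hind : LinearIndependent ℝ ![u₀, u₁])
    (w₁ : EuclideanSpace ℝ (Fin 2))
    (hw₁ : w₁ = u₁ - ⟪u₀, u₁⟫ • u₀)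
    (hu₀ : ‖u₀‖ = 1) :
    (1 + (⟪u₀, u₁⟫ ^ 2 + ⟪u₀, u₁⟫) / ‖w₁‖ ^ 2) •
        Matrix.vecMulVec (u₀ : Fin 2 → ℝ) u₀ +
      ((1 + ⟪u₀, u₁⟫) / ‖w₁‖ ^ 2) • Matrix.vecMulVec (u₁ : Fin 2 → ℝ) u₁ +
      (-⟪u₀, u₁⟫ / ‖w₁‖ ^ 2) • Matrix.vecMulVec (u₂ : Fin 2 → ℝ) u₂ =
      (1 : Matrix (Fin 2) (Fin 2) ℝ) := by
  have hu₂ : u₂ = -(u₀ + u₁) := eq_neg_of_add_eq_zero_right hsum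
  have hw₁_ne : w₁ ≠ 0 := by
    rw [hw₁, sub_ne_zero]
    intro h
    have := (LinearIndependent.pair_iff.mp hind ⟪u₀, u₁⟫ (-1) (by simp [← h])).2
    norm_num at this
  have hon := orthonormal_gramSchmidt_pair hu₀ (hw₁ ▸ hw₁_ne)
  rw [← hw₁] at hon
  have hid := hon.sum_vecMulVec_star_self (by simp)
  simp only [Fin.sum_univ_two, star_trivial, cons_val_zero, cons_val_one] at hid
  rw [hu₂, WithLp.ofLp_neg, WithLp.ofLp_add, vecMulVec_weighted_sum_eq_add_vecMulVec_sub_smul, ← hid]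
  rw [WithLp.ofLp_smul, smul_vecMulVec, vecMulVec_smul, smul_smul, hw₁, WithLp.ofLp_sub,
    WithLp.ofLp_smul, ← pow_two, inv_pow]
end

section
/- Let n ≥ 1 and consider x ∈ [−1/2, 1/2]ⁿ. Then Σᵢ xᵢ² ≤ (1/8)·Σᵢ (1 − cos(2π·xᵢ)). -/
theorem sum_sq_le_sum_one_sub_cos (n : ℕ) (hn : 1 ≤ n) (x : Fin n → ℝ)
    (hx : ∀ i, x i ∈ Set.Icc (-(1 / 2) : ℝ) (1 / 2)) :
    ∑ i, x i ^ 2 ≤ (1 / 8) * ∑ i, (1 - Real.cos (2 * Real.pi * x i)) := by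
  rw [Finset.mul_sum]
  apply Finset.sum_le_sum
  intro i _
  obtain ⟨h1, h2⟩ := hx i
  set y := |x i| with hy
  have hy0 : 0 ≤ y := abs_nonneg _
  have hy2 : y ≤ 1/2 := abs_le.mpr ⟨h1, h2⟩
  have hcos : Real.cos (2 * Real.pi * x i) = Real.cos (2 * Real.pi * y) := by
    rcases abs_choice (x i) with h | h
    · rw [hy, h]
    · rw [hy, h, mul_neg, Real.cos_neg]
  have hsq : x i ^ 2 = y ^ 2 := (sq_abs _).symm
  rw [hcos, hsq]
  have key : 2 * y ≤ Real.sin (Real.pi * y) := by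
    have := Real.mul_le_sin (x := Real.pi * y) (by positivity)
      (by nlinarith [Real.pi_pos])
    have hpi := Real.pi_pos
    calc 2 * y = 2 / Real.pi * (Real.pi * y) := by field_simp
    _ ≤ _ := this
  have h2m : Real.cos (2 * Real.pi * y) = 2 * Real.cos (Real.pi * y) ^ 2 - 1 := by
    rw [show 2 * Real.pi * y = 2 * (Real.pi * y) by ring, Real.cos_two_mul]
  nlinarith [key, hy0, Real.sin_sq_add_cos_sq (Real.pi * y)]
end
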